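/- For any finite ranked poset P, rowvacuation conjugates rowmotion to its inverse: Rvac ∘ row = row^{-1} ∘ Rvac on the set of antichains of P. Consequently row and Rvac generate a dihedral group action on A(P). -/

import Mathlib

/-!
Antichains `A` of `P` correspond bijectively to order ideals through `A ↦ P ∖ ↑A`, whose minimal
non-elements are exactly `A`. Under this correspondence the product `τ_N ⋯ τ_k` of antichain rank
toggles, which performs rowmotion on the ranks `≥ k` only, becomes the product `t_k ⋯ t_N` of
order-ideal rank toggles. Whether an element of rank `i` is toggled by `t_i` depends only on ranks
`i - 1`, `i` and `i + 1`, so each `t_i` is an involution and `t_i`, `t_j` commute when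
`|i - j| ≥ 2`. In any group with such generators, `σ = t_0 ⋯ t_N` and
`ε = (t_N) (t_{N-1} t_N) ⋯ (t_0 ⋯ t_N)` satisfy `σ ε σ = ε`, and `σ`, `ε` are rowmotion and
rowvacuation transported to order ideals.
-/

open scoped Classical

variable {α : Type*}

noncomputable def toggle [PartialOrder α] (p : α) (A : Finset α) : Finset α :=
  if p ∈ A then A.erase p
  else if IsAntichain (· ≤ ·) (↑(insert p A) : Set α) then insert p A
  else A

noncomputable def rowmotion [Fintype α] [PartialOrder α] (A : Finset α) : Finset α :=
  Finset.univ.filter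
    (fun x => (∀ y ∈ A, ¬ x ≤ y) ∧ ∀ z : α, (∀ y ∈ A, ¬ z ≤ y) → z ≤ x → z = x)

noncomputable def rankToggle [Fintype α] [PartialOrder α] (rk : α → ℕ) (i : ℕ)
    (A : Finset α) : Finset α :=
  (Finset.univ.filter (fun p => rk p = i)).toList.foldr toggle A

noncomputable def rvac [Fintype α] [PartialOrder α] (rk : α → ℕ) (N : ℕ)
    (A : Finset α) : Finset α :=
  (List.range (N + 1)).foldl
    (fun B k => (List.range' k (N + 1 - k)).foldl (fun C j => rankToggle rk j C) B) A

def IsRankFunction [PartialOrder α] (rk : α → ℕ) : Prop :=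
  (∀ p : α, (∀ q : α, ¬ q < p) → rk p = 0) ∧ ∀ x y : α, x ⋖ y → rk y = rk x + 1

section Words

variable {G : Type*} [Group G] (t : ℕ → G)

def rowWord : ℕ → ℕ → G
  | _, 0 => 1
  | k, n + 1 => t k * rowWord (k + 1) n

def rvacWord : ℕ → ℕ → G
  | _, 0 => 1
  | k, n + 1 => rvacWord (k + 1) n * rowWord t k (n + 1)

variable {t}

theorem commute_rowWord (hfar : ∀ i j, i + 2 ≤ j → Commute (t i) (t j)) {i k : ℕ}
    (hik : i + 2 ≤ k) (n : ℕ) : Commute (t i) (rowWord t k n) := by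
  induction n generalizing k with
  | zero => exact Commute.one_right _
  | succ n ih => exact (hfar i k hik).mul_right (ih (by omega))

theorem commute_rvacWord (hfar : ∀ i j, i + 2 ≤ j → Commute (t i) (t j)) {i k : ℕ}
    (hik : i + 2 ≤ k) (n : ℕ) : Commute (t i) (rvacWord t k n) := by
  induction n generalizing k with
  | zero => exact Commute.one_right _
  | succ n ih => exact (ih (by omega)).mul_right (commute_rowWord hfar hik _)

theorem rowWord_mul_rvacWord_mul_rowWord (hinv : ∀ i, t i * t i = 1)
    (hfar : ∀ i j, i + 2 ≤ j → Commute (t i) (t j)) (k n : ℕ) :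
    rowWord t k n * rvacWord t k n * rowWord t k n = rvacWord t k n := by
  induction n generalizing k with
  | zero => simp [rowWord, rvacWord]
  | succ n ih =>
    set s := rowWord t (k + 1) n
    -- `rvacWord t (k + 1) n = c * s`, where `c` only involves the toggles `t j` with `j ≥ k + 2`
    obtain ⟨c, hc, hcs⟩ : ∃ c, Commute (t k) c ∧ rvacWord t (k + 1) n = c * s := by
      cases n with
      | zero => exact ⟨1, Commute.one_right _, by simp [s, rowWord, rvacWord]⟩
      | succ m => exact ⟨_, commute_rvacWord hfar le_rfl m, rfl⟩
    have hscs : s * c * s = c :=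
      mul_right_cancel (by simpa only [hcs, mul_assoc] using ih (k + 1))
    calc rowWord t k (n + 1) * rvacWord t k (n + 1) * rowWord t k (n + 1)
        = t k * (s * c * s) * t k * s * (t k * s) := by simp [rowWord, rvacWord, hcs, s, mul_assoc]
      _ = c * (t k * t k) * s * t k * s := by rw [hscs, hc.eq]; simp [mul_assoc]
      _ = rvacWord t k (n + 1) := by simp [rowWord, rvacWord, hcs, s, hinv, mul_assoc]

end Words

section RankFunctions

variable [PartialOrder α] {rk : α → ℕ} {x y : α}

theorem strictMono_of_covBy [Fintype α] (hcov : ∀ x y : α, x ⋖ y → rk y = rk x + 1) :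
    StrictMono rk := by
  let := Fintype.toLocallyFiniteOrder (α := α)
  exact (strictMono_iff_forall_covBy rk).2 fun x y h => by rw [hcov x y h]; omega

theorem eq_of_le_of_rk_le (hrk : StrictMono rk) (h : x ≤ y) (h' : rk y ≤ rk x) : x = y :=
  by_contra fun hne => absurd (hrk (lt_of_le_of_ne h hne)) (by omega)

theorem isAntichain_rk_eq (hrk : StrictMono rk) (i : ℕ) :
    IsAntichain (· ≤ ·) {x | rk x = i} := fun x hx y hy hne hxy =>
  hne (eq_of_le_of_rk_le hrk hxy (by simp_all))

end RankFunctions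

section Toggles

variable [PartialOrder α] {p x : α} {A : Finset α} {s : Set α}

theorem mem_toggle_iff_of_isAntichain (hA : IsAntichain (· ≤ ·) (A : Set α)) :
    x ∈ toggle p A ↔
      if x = p then p ∉ A ∧ ∀ b ∈ A, b ≠ p → ¬ p ≤ b ∧ ¬ b ≤ p else x ∈ A := by
  have hins : IsAntichain (· ≤ ·) (↑(insert p A) : Set α) ↔
      ∀ b ∈ A, b ≠ p → ¬ p ≤ b ∧ ¬ b ≤ p := by
    rw [Finset.coe_insert, isAntichain_insert]
    exact ⟨fun h b hb hbp => h.2 hb (Ne.symm hbp), fun h => ⟨hA, fun b hb hpb => h b hb hpb.symm⟩⟩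
  unfold toggle
  split_ifs <;> simp_all

theorem isAntichain_toggle (hA : IsAntichain (· ≤ ·) (A : Set α)) :
    IsAntichain (· ≤ ·) (↑(toggle p A) : Set α) := by
  unfold toggle
  split_ifs with hp hins
  · exact hA.subset (by simp)
  · exact hins
  · exact hA

theorem isAntichain_foldr_toggle (hA : IsAntichain (· ≤ ·) (A : Set α)) (l : List α) :
    IsAntichain (· ≤ ·) (↑(l.foldr toggle A) : Set α) := by
  induction l with
  | nil => exact hA
  | cons p l ih => exact isAntichain_toggle ih

theorem mem_foldr_toggle (hs : IsAntichain (· ≤ ·) s) (hA : IsAntichain (· ≤ ·) (A : Set α))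
    {l : List α} (hl : l.Nodup) (hls : ∀ y ∈ l, y ∈ s) :
    x ∈ l.foldr toggle A ↔
      if x ∈ l then x ∉ A ∧ ∀ y ∈ A, y ∉ s → ¬ x ≤ y ∧ ¬ y ≤ x else x ∈ A := by
  induction l generalizing x with
  | nil => simp
  | cons p l ih =>
    obtain ⟨hpl, hl⟩ := List.nodup_cons.1 hl
    have hps : p ∈ s := hls p List.mem_cons_self
    have ih := fun x => ih (x := x) hl (fun y hy => hls y (List.mem_cons_of_mem p hy))
    rw [List.foldr_cons, mem_toggle_iff_of_isAntichain (isAntichain_foldr_toggle hA l)]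
    by_cases hxp : x = p
    · subst hxp
      have hpA : x ∈ l.foldr toggle A ↔ x ∈ A := by rw [ih, if_neg hpl]
      simp only [if_true, List.mem_cons_self, hpA]
      refine and_congr_right fun hxA => ⟨fun h y hyA hys => h y ?_ ?_, fun h b hb hbx => ?_⟩
      · rwa [ih, if_neg fun hyl => hys (hls y (List.mem_cons_of_mem x hyl))]
      · rintro rfl; exact hxA hyA
      · by_cases hbs : b ∈ s
        · exact ⟨hs hps hbs hbx.symm, hs hbs hps hbx⟩
        · rw [ih, if_neg fun hbl => hbs (hls b (List.mem_cons_of_mem x hbl))] at hb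
          exact h b hb hbs
    · simp only [hxp, if_false, ih, List.mem_cons, false_or]

end Toggles

section RankToggles

variable [Fintype α] [PartialOrder α] {rk : α → ℕ} {x : α} {A : Finset α}

theorem mem_rankToggle (hrk : StrictMono rk) (hA : IsAntichain (· ≤ ·) (A : Set α)) (i : ℕ) :
    x ∈ rankToggle rk i A ↔
      if rk x = i then x ∉ A ∧ ∀ y ∈ A, rk y ≠ i → ¬ x ≤ y ∧ ¬ y ≤ x else x ∈ A := by
  rw [rankToggle, mem_foldr_toggle (isAntichain_rk_eq hrk i) hA (Finset.nodup_toList _)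
    (by simp)]
  simp

theorem isAntichain_foldl_rankToggle (hA : IsAntichain (· ≤ ·) (A : Set α)) (l : List ℕ) :
    IsAntichain (· ≤ ·) (↑(l.foldl (fun C j => rankToggle rk j C) A) : Set α) := by
  induction l generalizing A with
  | nil => exact hA
  | cons i l ih => exact ih (isAntichain_foldr_toggle hA _)

end RankToggles

section PartialRowmotion

variable [Fintype α] [PartialOrder α] {rk : α → ℕ} {j k N : ℕ} {x : α} {A : Finset α}

def IsRowCandidate (rk : α → ℕ) (k : ℕ) (A : Finset α) (x : α) : Prop :=
  k ≤ rk x ∧ (∀ y ∈ A, k ≤ rk y → ¬ x ≤ y) ∧ ∀ y ∈ A, rk y < k → ¬ y ≤ x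

/-- Rowmotion performed on the ranks `≥ k` only, i.e. `τ_N ⋯ τ_k A`. -/
noncomputable def partialRowmotion (rk : α → ℕ) (k : ℕ) (A : Finset α) : Finset α :=
  A.filter (rk · < k) ∪ Finset.univ.filter (Minimal (IsRowCandidate rk k A))

theorem mem_partialRowmotion :
    x ∈ partialRowmotion rk k A ↔ (x ∈ A ∧ rk x < k) ∨ Minimal (IsRowCandidate rk k A) x := by
  simp [partialRowmotion]

theorem minimal_isRowCandidate_iff (hrk : StrictMono rk) (hk : k ≤ rk x) :
    Minimal (IsRowCandidate rk k A) x ↔ x ∉ A ∧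
      (∀ y ∈ partialRowmotion rk k A, rk y < rk x → ¬ y ≤ x) ∧
      ∀ y ∈ A, rk x < rk y → ¬ x ≤ y := by
  constructor
  · intro hmin
    refine ⟨fun hxA => hmin.prop.2.1 x hxA hk le_rfl, fun y hy hyx hle => ?_,
      fun y hyA hxy => hmin.prop.2.1 y hyA (by omega)⟩
    rcases mem_partialRowmotion.1 hy with ⟨hyA, hyk⟩ | hymin
    · exact hmin.prop.2.2 y hyA hyk hle
    · exact absurd (hmin.eq_of_le hymin.prop hle) (by rintro rfl; omega)
  · rintro ⟨hxA, hbelow, habove⟩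
    have hcand : IsRowCandidate rk k A x := by
      refine ⟨hk, fun y hyA _ hxy => ?_, fun y hyA hyk =>
        hbelow y (mem_partialRowmotion.2 (Or.inl ⟨hyA, hyk⟩)) (by omega)⟩
      rcases lt_trichotomy (rk y) (rk x) with hlt | heq | hgt
      · exact absurd (hrk.monotone hxy) (by omega)
      · exact hxA (eq_of_le_of_rk_le hrk hxy heq.le ▸ hyA)
      · exact habove y hyA hgt hxy
    refine ⟨hcand, fun z hz hzx => ?_⟩
    rcases eq_or_lt_of_le hzx with rfl | hlt
    · exact le_rfl
    obtain ⟨m, hmz, hm⟩ := exists_minimal_le_of_wellFoundedLT _ z hz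
    exact absurd (hmz.trans hzx) (hbelow m (mem_partialRowmotion.2 (Or.inr hm))
      (lt_of_le_of_lt (hrk.monotone hmz) (hrk hlt)))

theorem rankToggle_filter_partialRowmotion_union (hrk : StrictMono rk) (hkj : k ≤ j)
    (hB : IsAntichain (· ≤ ·)
      (↑((partialRowmotion rk k A).filter (rk · < j) ∪ A.filter (j ≤ rk ·)) : Set α)) :
    rankToggle rk j ((partialRowmotion rk k A).filter (rk · < j) ∪ A.filter (j ≤ rk ·)) =
      (partialRowmotion rk k A).filter (rk · < j + 1) ∪ A.filter (j + 1 ≤ rk ·) := by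
  ext x
  rw [mem_rankToggle hrk hB]
  split_ifs with hx
  · subst hx
    have : x ∈ partialRowmotion rk k A ↔ Minimal (IsRowCandidate rk k A) x := by
      simp [mem_partialRowmotion, not_lt.2 hkj]
    simp only [Finset.mem_union, Finset.mem_filter, this, minimal_isRowCandidate_iff hrk hkj,
      lt_irrefl, and_false, le_refl, and_true, false_or, Nat.lt_add_one, Nat.not_succ_le_self,
      or_false]
    refine and_congr_right fun _ => ⟨fun h => ⟨fun y hy hyx => (h y (Or.inl ⟨hy, hyx⟩) hyx.ne).2,
      fun y hy hxy => (h y (Or.inr ⟨hy, hxy.le⟩) hxy.ne').1⟩, ?_⟩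
    rintro ⟨hbelow, habove⟩ y (⟨hy, hyx⟩ | ⟨hy, hxy⟩) hne
    · exact ⟨fun h => absurd (hrk.monotone h) (by omega), hbelow y hy hyx⟩
    · exact ⟨habove y hy (lt_of_le_of_ne hxy (Ne.symm hne)),
        fun h => absurd (hrk.monotone h) (by omega)⟩
  · have hlt : rk x < j + 1 ↔ rk x < j := by omega
    have hle : j + 1 ≤ rk x ↔ j ≤ rk x := by omega
    simp only [Finset.mem_union, Finset.mem_filter, hlt, hle]

theorem foldl_rankToggle_range' (hrk : StrictMono rk) (hA : IsAntichain (· ≤ ·) (A : Set α))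
    (k m : ℕ) : (List.range' k m).foldl (fun C j => rankToggle rk j C) A =
      (partialRowmotion rk k A).filter (rk · < k + m) ∪ A.filter (k + m ≤ rk ·) := by
  induction m with
  | zero =>
    have : (partialRowmotion rk k A).filter (rk · < k) = A.filter (rk · < k) := by
      ext x
      simp only [Finset.mem_filter, mem_partialRowmotion]
      exact ⟨fun ⟨h, hk⟩ => ⟨h.elim And.left fun hx => absurd hx.prop.1 (by omega), hk⟩,
        fun ⟨h, hk⟩ => ⟨Or.inl ⟨h, hk⟩, hk⟩⟩
    simp only [List.range'_zero, List.foldl_nil, Nat.add_zero, this]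
    simpa only [not_lt] using (Finset.filter_union_filter_not_eq (rk · < k) A).symm
  | succ m ih =>
    have hB := isAntichain_foldl_rankToggle (rk := rk) hA (List.range' k m)
    rw [ih] at hB
    rw [List.range'_1_concat, List.foldl_append, ih, List.foldl_cons, List.foldl_nil,
      rankToggle_filter_partialRowmotion_union hrk (by omega) hB, ← Nat.add_assoc]

theorem foldl_rankToggle_eq_partialRowmotion (hrk : StrictMono rk)
    (hA : IsAntichain (· ≤ ·) (A : Set α)) (hN : ∀ x, rk x ≤ N) (hk : k ≤ N + 1) :
    (List.range' k (N + 1 - k)).foldl (fun C j => rankToggle rk j C) A =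
      partialRowmotion rk k A := by
  rw [foldl_rankToggle_range' hrk hA, Nat.add_sub_cancel' hk]
  ext x
  have := hN x
  simp [this, show ¬ N < rk x by omega]

theorem rowmotion_eq_partialRowmotion_zero : rowmotion A = partialRowmotion rk 0 A := by
  have : IsRowCandidate rk 0 A = fun x => ∀ y ∈ A, ¬ x ≤ y := by
    ext x
    simp [IsRowCandidate]
  ext x
  simp [rowmotion, mem_partialRowmotion, this, minimal_iff, eq_comm]

theorem isAntichain_rowmotion (A : Finset α) : IsAntichain (· ≤ ·) (↑(rowmotion A) : Set α) :=
  fun a ha b hb hne hab => by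
    simp only [rowmotion, Finset.coe_filter, Finset.mem_univ, true_and, Set.mem_ofPred_eq] at ha hb
    exact hne (hb.2 a ha.1 hab)

end PartialRowmotion

section IdealToggles

theorem LowerSet.exists_lt_mem_iff_exists_covBy [PartialOrder α] [IsStronglyAtomic α]
    (I : LowerSet α) {x : α} : (∃ q ∈ I, x < q) ↔ ∃ q ∈ I, x ⋖ q := by
  refine ⟨fun ⟨q, hq, hxq⟩ => ?_, fun ⟨q, hq, hxq⟩ => ⟨q, hq, hxq.lt⟩⟩
  obtain ⟨c, hxc, hcq⟩ := exists_covBy_le_of_lt hxq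
  exact ⟨c, I.lower hcq hq, hxc⟩

theorem LowerSet.forall_lt_mem_iff_forall_covBy [PartialOrder α] [IsStronglyCoatomic α]
    (I : LowerSet α) {x : α} : (∀ q < x, q ∈ I) ↔ ∀ q, q ⋖ x → q ∈ I := by
  refine ⟨fun h q hq => h q hq.lt, fun h q hqx => ?_⟩
  obtain ⟨c, hqc, hcx⟩ := exists_le_covBy_of_lt hqx
  exact I.lower hqc (h c hcx)

variable [PartialOrder α] {rk : α → ℕ} {i j : ℕ} {x : α} {I J : LowerSet α}

/-- Toggling a lower set at all elements of rank `i` at once: its maximal elements of rank `i`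
leave it, its minimal non-elements of rank `i` enter it. -/
def idealToggle (hrk : StrictMono rk) (i : ℕ) (I : LowerSet α) : LowerSet α where
  carrier := {x | if rk x = i then (x ∈ I ∧ ∃ q ∈ I, x < q) ∨ (x ∉ I ∧ ∀ q < x, q ∈ I)
    else x ∈ I}
  lower' y x hxy hy := by
    rcases eq_or_lt_of_le hxy with rfl | hlt
    · exact hy
    have hxI : x ∈ I := by
      simp only [Set.mem_ofPred_eq] at hy
      split_ifs at hy with hyi
      · exact hy.elim (fun h => I.lower hxy h.1) fun h => h.2 x hlt
      · exact I.lower hxy hy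
    simp only [Set.mem_ofPred_eq]
    split_ifs with hxi
    · refine Or.inl ⟨hxI, y, ?_, hlt⟩
      have : rk y ≠ i := by have := hrk hlt; omega
      simpa [this] using hy
    · exact hxI

theorem mem_idealToggle (hrk : StrictMono rk) : x ∈ idealToggle hrk i I ↔
    if rk x = i then (x ∈ I ∧ ∃ q ∈ I, x < q) ∨ (x ∉ I ∧ ∀ q < x, q ∈ I) else x ∈ I :=
  Iff.rfl

theorem mem_idealToggle_of_rk_ne (hrk : StrictMono rk) (h : rk x ≠ i) :
    x ∈ idealToggle hrk i I ↔ x ∈ I := by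
  rw [mem_idealToggle, if_neg h]

theorem exists_lt_mem_congr [IsStronglyAtomic α] (hcov : ∀ x y : α, x ⋖ y → rk y = rk x + 1)
    (h : ∀ y, rk y = rk x + 1 → (y ∈ I ↔ y ∈ J)) : (∃ q ∈ I, x < q) ↔ ∃ q ∈ J, x < q := by
  simp only [LowerSet.exists_lt_mem_iff_exists_covBy]
  exact exists_congr fun q => and_congr_left fun hxq => h q (hcov x q hxq)

theorem forall_lt_mem_congr [IsStronglyCoatomic α] (hcov : ∀ x y : α, x ⋖ y → rk y = rk x + 1)
    (h : ∀ y, rk y + 1 = rk x → (y ∈ I ↔ y ∈ J)) : (∀ q < x, q ∈ I) ↔ ∀ q < x, q ∈ J := by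
  simp only [LowerSet.forall_lt_mem_iff_forall_covBy]
  exact forall_congr' fun q => imp_congr_right fun hqx => h q (hcov q x hqx).symm

theorem idealToggle_involutive [IsStronglyAtomic α] [IsStronglyCoatomic α] (hrk : StrictMono rk)
    (hcov : ∀ x y : α, x ⋖ y → rk y = rk x + 1) (i : ℕ) :
    Function.Involutive (idealToggle hrk i) := by
  refine fun I => SetLike.ext fun x => ?_
  by_cases hx : rk x = i
  · have hagree : ∀ y, rk y ≠ i → (y ∈ idealToggle hrk i I ↔ y ∈ I) :=
      fun y hy => mem_idealToggle_of_rk_ne hrk hy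
    have habove := exists_lt_mem_congr hcov fun y (hy : rk y = rk x + 1) => hagree y (by omega)
    have hbelow := forall_lt_mem_congr hcov fun y (hy : rk y + 1 = rk x) => hagree y (by omega)
    have hmem_of_above : (∃ q ∈ I, x < q) → x ∈ I := fun ⟨q, hq, hxq⟩ => I.lower hxq.le hq
    have hbelow_of_mem : x ∈ I → ∀ q < x, q ∈ I := fun hx q hq => I.lower hq.le hx
    rw [mem_idealToggle hrk, if_pos hx, habove, hbelow, mem_idealToggle hrk, if_pos hx]
    generalize (∃ q ∈ I, x < q) = above at hmem_of_above ⊢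
    generalize (∀ q < x, q ∈ I) = below at hbelow_of_mem ⊢
    tauto
  · rw [mem_idealToggle_of_rk_ne hrk hx, mem_idealToggle_of_rk_ne hrk hx]

theorem mem_idealToggle_idealToggle_of_far [IsStronglyAtomic α] [IsStronglyCoatomic α]
    (hrk : StrictMono rk) (hcov : ∀ x y : α, x ⋖ y → rk y = rk x + 1)
    (hij : i + 2 ≤ j ∨ j + 2 ≤ i) (hx : rk x = i) :
    x ∈ idealToggle hrk i (idealToggle hrk j I) ↔ x ∈ idealToggle hrk i I := by
  have hagree : ∀ y, rk y + 1 = i ∨ rk y = i ∨ rk y = i + 1 →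
      (y ∈ idealToggle hrk j I ↔ y ∈ I) := fun y hy => mem_idealToggle_of_rk_ne hrk (by omega)
  rw [mem_idealToggle hrk (i := i) (I := idealToggle hrk j I),
    mem_idealToggle hrk (i := i) (I := I), if_pos hx, if_pos hx, hagree x (by omega),
    exists_lt_mem_congr hcov fun y hy => hagree y (by omega),
    forall_lt_mem_congr hcov fun y hy => hagree y (by omega)]

theorem idealToggle_comm [IsStronglyAtomic α] [IsStronglyCoatomic α] (hrk : StrictMono rk)
    (hcov : ∀ x y : α, x ⋖ y → rk y = rk x + 1) (hij : i + 2 ≤ j) (I : LowerSet α) :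
    idealToggle hrk i (idealToggle hrk j I) = idealToggle hrk j (idealToggle hrk i I) := by
  refine SetLike.ext fun x => ?_
  by_cases hi : rk x = i
  · rw [mem_idealToggle_idealToggle_of_far hrk hcov (Or.inl hij) hi,
      mem_idealToggle_of_rk_ne hrk (i := j) (by omega)]
  by_cases hj : rk x = j
  · rw [mem_idealToggle_idealToggle_of_far hrk hcov (Or.inr hij) hj,
      mem_idealToggle_of_rk_ne hrk hi]
  simp only [mem_idealToggle_of_rk_ne hrk hi, mem_idealToggle_of_rk_ne hrk hj]

end IdealToggles

section IdealTogglePerm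

variable [Fintype α] [PartialOrder α] {rk : α → ℕ}

noncomputable def idealTogglePerm (hcov : ∀ x y : α, x ⋖ y → rk y = rk x + 1) (i : ℕ) :
    Equiv.Perm (LowerSet α) :=
  (idealToggle_involutive (strictMono_of_covBy hcov) hcov i).toPerm

theorem idealTogglePerm_mul_self (hcov : ∀ x y : α, x ⋖ y → rk y = rk x + 1) (i : ℕ) :
    idealTogglePerm hcov i * idealTogglePerm hcov i = 1 :=
  Equiv.ext (idealToggle_involutive (strictMono_of_covBy hcov) hcov i)

theorem commute_idealTogglePerm (hcov : ∀ x y : α, x ⋖ y → rk y = rk x + 1) {i j : ℕ}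
    (hij : i + 2 ≤ j) : Commute (idealTogglePerm hcov i) (idealTogglePerm hcov j) :=
  Equiv.ext (idealToggle_comm (strictMono_of_covBy hcov) hcov hij)

end IdealTogglePerm

section ComplUpperClosure

variable [PartialOrder α] {x : α} {A B : Finset α}

noncomputable def complUpperClosure (A : Finset α) : LowerSet α :=
  (upperClosure (A : Set α)).compl

theorem mem_complUpperClosure : x ∈ complUpperClosure A ↔ ∀ a ∈ A, ¬ a ≤ x := by
  simp [complUpperClosure]

theorem eq_of_complUpperClosure_eq (hA : IsAntichain (· ≤ ·) (A : Set α))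
    (hB : IsAntichain (· ≤ ·) (B : Set α)) (h : complUpperClosure A = complUpperClosure B) :
    A = B := by
  have h' : upperClosure (A : Set α) = upperClosure (B : Set α) := by
    simpa only [complUpperClosure, UpperSet.compl_compl] using congrArg LowerSet.compl h
  ext x
  rw [← Finset.mem_coe, ← hA.minimal_mem_upperClosure_iff_mem, h',
    hB.minimal_mem_upperClosure_iff_mem, Finset.mem_coe]

theorem exists_mem_ge_iff_of_isAntichain (hA : IsAntichain (· ≤ ·) (A : Set α)) :
    (∃ a ∈ A, x ≤ a) ↔
      (x ∈ complUpperClosure A ∧ ∃ q, (∃ a ∈ A, q ≤ a) ∧ x < q) ∨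
        (x ∉ complUpperClosure A ∧ ∀ q < x, q ∈ complUpperClosure A) := by
  simp only [mem_complUpperClosure]
  constructor
  · rintro ⟨a, haA, hxa⟩
    by_cases hxA : ∀ b ∈ A, ¬ b ≤ x
    · exact Or.inl ⟨hxA, a, ⟨a, haA, le_rfl⟩, lt_of_le_of_ne hxa fun hxa' => hxA a haA hxa'.ge⟩
    · refine Or.inr ⟨hxA, fun q hqx b hbA hbq => hA hbA haA ?_ (hbq.trans (hqx.le.trans hxa))⟩
      rintro rfl
      exact (lt_of_lt_of_le hqx hxa).not_ge hbq
  · rintro (⟨_, q, ⟨a, haA, hqa⟩, hxq⟩ | ⟨hxA, hbelow⟩)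
    · exact ⟨a, haA, hxq.le.trans hqa⟩
    · push Not at hxA
      obtain ⟨a, haA, hax⟩ := hxA
      rcases eq_or_lt_of_le hax with rfl | hlt
      · exact ⟨a, haA, le_rfl⟩
      · exact absurd le_rfl (hbelow a hlt a haA)

end ComplUpperClosure

section Transfer

variable [Fintype α] [PartialOrder α] {rk : α → ℕ} {k N : ℕ} {x : α} {A : Finset α}

theorem mem_complUpperClosure_partialRowmotion (hrk : StrictMono rk)
    (hA : IsAntichain (· ≤ ·) (A : Set α)) :
    x ∈ complUpperClosure (partialRowmotion rk k A) ↔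
      if rk x < k then x ∈ complUpperClosure A else ∃ a ∈ A, x ≤ a := by
  simp only [mem_complUpperClosure, mem_partialRowmotion]
  split_ifs with hxk
  · refine ⟨fun h a haA hax => h a (Or.inl ⟨haA, lt_of_le_of_lt (hrk.monotone hax) hxk⟩) hax,
      fun h b hb hbx => hb.elim (fun hb => h b hb.1 hbx) fun hb => ?_⟩
    exact absurd (hrk.monotone hbx) (by have := hb.prop.1; omega)
  · constructor
    · intro h
      by_contra! hnot
      have hcand : IsRowCandidate rk k A x :=
        ⟨by omega, fun y hy _ => hnot y hy, fun y hy hyk => h y (Or.inl ⟨hy, hyk⟩)⟩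
      obtain ⟨m, hmx, hm⟩ := exists_minimal_le_of_wellFoundedLT _ x hcand
      exact h m (Or.inr hm) hmx
    · rintro ⟨a, haA, hxa⟩ b (⟨hbA, hbk⟩ | hb) hbx
      · refine hA hbA haA ?_ (hbx.trans hxa)
        rintro rfl
        exact absurd (hrk.monotone hxa) (by omega)
      · exact hb.prop.2.1 a haA (by have := hrk.monotone hxa; omega) (hbx.trans hxa)

theorem complUpperClosure_partialRowmotion (hrk : StrictMono rk)
    (hA : IsAntichain (· ≤ ·) (A : Set α)) (k : ℕ) :
    complUpperClosure (partialRowmotion rk k A) =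
      idealToggle hrk k (complUpperClosure (partialRowmotion rk (k + 1) A)) := by
  refine SetLike.ext fun x => ?_
  by_cases hx : rk x = k
  · set J := complUpperClosure (partialRowmotion rk (k + 1) A)
    have hJ : ∀ y, y ∈ J ↔ if rk y < k + 1 then y ∈ complUpperClosure A else ∃ a ∈ A, y ≤ a :=
      fun y => mem_complUpperClosure_partialRowmotion hrk hA
    have habove : (∃ q ∈ J, x < q) ↔ ∃ q, (∃ a ∈ A, q ≤ a) ∧ x < q :=
      exists_congr fun q => and_congr_left fun hxq => by
        rw [hJ, if_neg (by have := hrk hxq; omega)]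
    have hbelow : (∀ q < x, q ∈ J) ↔ ∀ q < x, q ∈ complUpperClosure A :=
      forall_congr' fun q => imp_congr_right fun hqx => by
        rw [hJ, if_pos (by have := hrk hqx; omega)]
    rw [mem_complUpperClosure_partialRowmotion hrk hA, if_neg (by omega), mem_idealToggle hrk,
      if_pos hx, hJ, if_pos (by omega), habove, hbelow]
    exact exists_mem_ge_iff_of_isAntichain hA
  · rw [mem_idealToggle_of_rk_ne hrk hx, mem_complUpperClosure_partialRowmotion hrk hA,
      mem_complUpperClosure_partialRowmotion hrk hA]
    simp only [show rk x < k + 1 ↔ rk x < k by omega]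

theorem partialRowmotion_of_forall_rk_lt (h : ∀ x, rk x < k) : partialRowmotion rk k A = A := by
  ext x
  simp only [mem_partialRowmotion, h x, and_true, or_iff_left_iff_imp]
  exact fun hx => absurd hx.prop.1 (by have := h x; omega)

theorem complUpperClosure_partialRowmotion_eq_rowWord (hcov : ∀ x y : α, x ⋖ y → rk y = rk x + 1)
    (hA : IsAntichain (· ≤ ·) (A : Set α)) (hN : ∀ x, rk x ≤ N) {k n : ℕ} (hkn : k + n = N + 1) :
    complUpperClosure (partialRowmotion rk k A) =
      rowWord (idealTogglePerm hcov) k n (complUpperClosure A) := by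
  induction n generalizing k with
  | zero =>
    rw [partialRowmotion_of_forall_rk_lt fun x => by have := hN x; omega]
    rfl
  | succ n ih =>
    rw [complUpperClosure_partialRowmotion (strictMono_of_covBy hcov) hA k, ih (by omega),
      rowWord, Equiv.Perm.mul_apply]
    rfl

theorem complUpperClosure_rowmotion (hcov : ∀ x y : α, x ⋖ y → rk y = rk x + 1)
    (hN : ∀ x, rk x ≤ N) (hA : IsAntichain (· ≤ ·) (A : Set α)) :
    complUpperClosure (rowmotion A) =
      rowWord (idealTogglePerm hcov) 0 (N + 1) (complUpperClosure A) := by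
  rw [rowmotion_eq_partialRowmotion_zero (rk := rk),
    complUpperClosure_partialRowmotion_eq_rowWord hcov hA hN (Nat.zero_add _)]

theorem complUpperClosure_foldl_blocks (hcov : ∀ x y : α, x ⋖ y → rk y = rk x + 1)
    (hN : ∀ x, rk x ≤ N) {k n : ℕ} (hkn : k + n = N + 1) (hA : IsAntichain (· ≤ ·) (A : Set α)) :
    complUpperClosure ((List.range' k n).foldl
        (fun B k => (List.range' k (N + 1 - k)).foldl (fun C j => rankToggle rk j C) B) A) =
      rvacWord (idealTogglePerm hcov) k n (complUpperClosure A) := by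
  induction n generalizing k A with
  | zero => rfl
  | succ n ih =>
    have hrk := strictMono_of_covBy hcov
    rw [List.range'_succ, List.foldl_cons, ih (by omega) (isAntichain_foldl_rankToggle hA _),
      foldl_rankToggle_eq_partialRowmotion hrk hA hN (by omega),
      complUpperClosure_partialRowmotion_eq_rowWord hcov hA hN (n := n + 1) hkn, rvacWord,
      Equiv.Perm.mul_apply]

theorem complUpperClosure_rvac (hcov : ∀ x y : α, x ⋖ y → rk y = rk x + 1)
    (hN : ∀ x, rk x ≤ N) (hA : IsAntichain (· ≤ ·) (A : Set α)) :
    complUpperClosure (rvac rk N A) =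
      rvacWord (idealTogglePerm hcov) 0 (N + 1) (complUpperClosure A) := by
  rw [rvac, List.range_eq_range',
    complUpperClosure_foldl_blocks hcov hN (Nat.zero_add _) hA]

theorem isAntichain_rvac (hA : IsAntichain (· ≤ ·) (A : Set α)) :
    IsAntichain (· ≤ ·) (↑(rvac rk N A) : Set α) := by
  unfold rvac
  induction List.range (N + 1) generalizing A with
  | nil => exact hA
  | cons k l ih => exact ih (isAntichain_foldl_rankToggle hA _)

end Transfer

/-- `Rvac ∘ row = row⁻¹ ∘ Rvac`, stated equivalently (since `row` is a bijection
on antichains) as `row ∘ Rvac ∘ row = Rvac`. -/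
theorem rvac_row_dihedral [Fintype α] [PartialOrder α] (rk : α → ℕ)
    (hrk : IsRankFunction rk) (A : Finset α)
    (hA : IsAntichain (· ≤ ·) (↑A : Set α)) :
    rowmotion (rvac rk (Finset.univ.sup rk) (rowmotion A)) =
      rvac rk (Finset.univ.sup rk) A := by
  have hN : ∀ x, rk x ≤ Finset.univ.sup rk := fun x => Finset.le_sup (Finset.mem_univ x)
  have hrow := isAntichain_rowmotion A
  refine eq_of_complUpperClosure_eq (isAntichain_rowmotion _) (isAntichain_rvac hA) ?_
  rw [complUpperClosure_rowmotion hrk.2 hN (isAntichain_rvac hrow),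
    complUpperClosure_rvac hrk.2 hN hrow, complUpperClosure_rowmotion hrk.2 hN hA,
    complUpperClosure_rvac hrk.2 hN hA, ← Equiv.Perm.mul_apply, ← Equiv.Perm.mul_apply,
    rowWord_mul_rvacWord_mul_rowWord (idealTogglePerm_mul_self hrk.2)
      fun _ _ => commute_idealTogglePerm hrk.2]
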